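/- Let p be a SafeTree policy over a finite base alphabet Σ̃ such that the DFA of every regular expression occurring in p has at most R states, every sub-policy of p has fan-out at most k, and p has nesting depth at most d (depth and fan-out defined inductively over the policy syntax). Then the VPA ⟦p⟧_VPA compiled from p by the paper's explicit compilation rules has at most (k+1)^d · (R + 5) states; in particular its number of states is O((k+1)^d · R). -/
import Mathlib


open Classical

namespace SafeTree

/-- Call and return symbols over a base alphabet `A`:
`Sym.call a` is `⟨a` and `Sym.ret a` is `a⟩`. -/
inductive Sym (A : Type) : Type
  | call : A → Sym A
  | ret : A → Sym A
  deriving DecidableEq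

/-- Well-matched words over call/return symbols: every call is matched with a
later return and matched pairs do not cross (the Dyck condition). -/
inductive WellMatched {A : Type} : List (Sym A) → Prop
  | nil : WellMatched []
  | wrap {w : List (Sym A)} (a b : A) :
      WellMatched w → WellMatched (Sym.call a :: (w ++ [Sym.ret b]))
  | append {w₁ w₂ : List (Sym A)} :
      WellMatched w₁ → WellMatched w₂ → WellMatched (w₁ ++ w₂)

/-- A rooted well-matched nested word: a well-matched word whose first and last
positions are matched with each other. -/
def Rooted {A : Type} (n : List (Sym A)) : Prop :=
  ∃ (a b : A) (w : List (Sym A)), WellMatched w ∧ n = Sym.call a :: (w ++ [Sym.ret b])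

/-- Position `i` (0-indexed) of `n` holds a call symbol. -/
def IsCallAt {A : Type} (n : List (Sym A)) (i : ℕ) : Prop :=
  ∃ a, n[i]? = some (Sym.call a)

/-- Position `j` (0-indexed) of `n` holds a return symbol. -/
def IsRetAt {A : Type} (n : List (Sym A)) (j : ℕ) : Prop :=
  ∃ a, n[j]? = some (Sym.ret a)

/-- The matching relation of a nested word, on 0-indexed positions: call
position `i` is matched with return position `j`. -/
def MatchedAt {A : Type} (n : List (Sym A)) (i j : ℕ) : Prop :=
  i < j ∧ j < n.length ∧ IsCallAt n i ∧ IsRetAt n j ∧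
    WellMatched ((n.drop (i+1)).take (j - (i+1)))

/-- The word of base symbols of the call positions, read left to right. -/
def callsOf {A : Type} : List (Sym A) → List A
  | [] => []
  | Sym.call a :: w => a :: callsOf w
  | Sym.ret _ :: w => callsOf w

/-- A deterministic visibly pushdown automaton over base alphabet `A`
(call symbols `⟨a` and return symbols `a⟩` for `a : A`), states `Q`,
and stack alphabet `Γ` with distinguished bottom symbol `bot`. -/
structure VPA (A : Type) (Q : Type) (Γ : Type) where
  qinit : Q
  final : Set Q
  bot : Γ
  callStep : Q → A → Q × Γ
  retStep : Q → Γ → A → Q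

namespace VPA

variable {A Q Γ : Type}

/-- One step of a VPA on a call or a return symbol.  The stack is represented
as a list with its top at the head; the empty list represents the stack
containing only the bottom symbol `⊥`, which is never pushed nor removed. -/
def step (M : VPA A Q Γ) : Q × List Γ → Sym A → Q × List Γ
  | (q, θ), Sym.call a => ((M.callStep q a).1, (M.callStep q a).2 :: θ)
  | (q, []), Sym.ret a => (M.retStep q M.bot a, [])
  | (q, s :: θ), Sym.ret a => (M.retStep q s a, θ)

/-- The configuration reached by running `M` on `w` from configuration `c`. -/
def run (M : VPA A Q Γ) (c : Q × List Γ) (w : List (Sym A)) : Q × List Γ :=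
  w.foldl M.step c

/-- `M` accepts `w` if the run from the initial configuration `(q_init, ⊥)`
ends in a final state. -/
def Accepts (M : VPA A Q Γ) (w : List (Sym A)) : Prop :=
  (M.run (M.qinit, []) w).1 ∈ M.final

end VPA

/-- A universal state space hosting all the compiled automata: distinguished
control states, states of the DFAs of the regular expressions (`dfa`, `dfa2`),
augmented copies (`aug`), and states of recursively compiled sub-automata
(`sub i s` is state `s` of the `i`-th sub-automaton). -/
inductive St (σ : Type) : Type
  | beg | fin | sat | rej | exist
  | dfa (q : σ)
  | dfa2 (q : σ)
  | aug (q : σ)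
  | sub (i : ℕ) (s : St σ)
  deriving DecidableEq

/-- The VPA `M(callseq reg)` compiled from the linear sequence policy
`callseq reg`, given a DFA `d` for `reg`: it simulates `d` on call symbols
(pushing the current state), ignores return symbols (keeping the current
state), and accepts, on the matched return of the first symbol (recognized by
the stack symbol `q_beg`), iff the DFA is in an accepting state; all missing
transitions are sent to the sink reject state. -/
noncomputable def compileLin {A σ : Type} (d : DFA A σ) :
    VPA A (St σ) (Option (St σ)) where
  qinit := .beg
  final := {St.fin}
  bot := none
  callStep := fun q s =>
    match q with
    | .beg => (.dfa (d.step d.start s), some .beg)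
    | .dfa q₁ => (.dfa (d.step q₁ s), some (.dfa q₁))
    | _ => (.rej, some .rej)
  retStep := fun q γ _s =>
    match q, γ with
    | .dfa q₁, some .beg => if q₁ ∈ d.accept then .fin else .rej
    | .dfa q₁, some (.dfa _) => .dfa q₁
    | _, _ => .rej

/-! ### Service-tree concepts on rooted well-matched nested words -/

/-- The path `π(n, m)` from the root to call position `m`: the (increasing)
list of call positions `i ≤ m` whose matched returns occur after position `m`. -/
noncomputable def pathTo {A : Type} (n : List (Sym A)) (m : ℕ) : List ℕ :=
  (List.range (m+1)).filter
    (fun i => decide (IsCallAt n i ∧ ∃ j, MatchedAt n i j ∧ m < j))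

/-- `Calls`: the word of base symbols of the positions of a path. -/
def callsOfPath {A : Type} (n : List (Sym A)) (ps : List ℕ) : List A :=
  ps.filterMap (fun i =>
    match n[i]? with
    | some (Sym.call a) => some a
    | _ => none)

/-- The path from the root to call position `m` is a *first (shortest) match*
of the language `L`: its `Calls`-word is in `L` and no proper prefix of that
word is in `L`. -/
def FirstMatchAt {A : Type} (n : List (Sym A)) (L : Language A) (m : ℕ) : Prop :=
  IsCallAt n m ∧ callsOfPath n (pathTo n m) ∈ L ∧
    ∀ w : List A, w <+: callsOfPath n (pathTo n m) →
      w ≠ callsOfPath n (pathTo n m) → w ∉ L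

/-- The sub-nested word `n[i, x]`: the restriction of `n` to positions `i`
through `x` (inclusive). -/
def subNW {A : Type} (n : List (Sym A)) (i x : ℕ) : List (Sym A) :=
  (n.drop i).take (x + 1 - i)

/-- Call position `m` is a child of the root of `n`: the path from the root to
`m` is exactly `[root, m]`. -/
noncomputable def IsChild {A : Type} (n : List (Sym A)) (m : ℕ) : Prop :=
  pathTo n m = [0, m]

/-- `Subtree(n)`: the set of sub-nested words of `n` rooted at children of the
root of `n`. -/
noncomputable def Subtrees {A : Type} (n : List (Sym A)) : Set (List (Sym A)) :=
  {w | ∃ m x, IsChild n m ∧ MatchedAt n m x ∧ w = subNW n m x}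

/-- Call position `m` of `n` is a leaf: it is immediately followed by its
matched return.  Paths ending at leaves make up `SeqLeaf(n)`. -/
def SeqLeafAt {A : Type} (n : List (Sym A)) (m : ℕ) : Prop :=
  IsCallAt n m ∧ MatchedAt n m (m+1)

/-! ### Hierarchical policies: syntax -/

mutual
/-- Hierarchical SafeTree policies:
`match reg₁ all-path reg₂`, `match reg all-children p`, and
`match reg exists-child p₁ then … then p_k` (with `k ≥ 1`).  Each regular
expression is accompanied by a DFA for it (used by the compiler). -/
inductive HPolicy (A σ : Type) : Type
  | allPath : RegularExpression A → RegularExpression A →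
      DFA A σ → DFA A σ → HPolicy A σ
  | allChildren : RegularExpression A → DFA A σ → HPolicy A σ → HPolicy A σ
  | existsChild : RegularExpression A → DFA A σ → HPolicyList A σ → HPolicy A σ

/-- A nonempty list `p₁ then … then p_k` of hierarchical policies. -/
inductive HPolicyList (A σ : Type) : Type
  | single : HPolicy A σ → HPolicyList A σ
  | cons : HPolicy A σ → HPolicyList A σ → HPolicyList A σ
end

mutual
/-- Well-formedness: every carried DFA recognizes the language of its regular
expression, and the regular expressions after `match` do not match the empty
word. -/
def HPolicy.WF {A σ : Type} : HPolicy A σ → Prop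
  | .allPath r₁ r₂ d₁ d₂ =>
      d₁.accepts = r₁.matches' ∧ d₂.accepts = r₂.matches' ∧ [] ∉ r₁.matches'
  | .allChildren r d p => d.accepts = r.matches' ∧ [] ∉ r.matches' ∧ p.WF
  | .existsChild r d pl => d.accepts = r.matches' ∧ [] ∉ r.matches' ∧ pl.WFL

def HPolicyList.WFL {A σ : Type} : HPolicyList A σ → Prop
  | .single p => p.WF
  | .cons p pl => p.WF ∧ pl.WFL
end

/-! ### Hierarchical policies: nested-word (tree) semantics -/

mutual
/-- The nested-word semantics `⟦p⟧_Tree` of hierarchical policies, on rooted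
well-matched nested words. -/
noncomputable def TreeSem {A σ : Type} : HPolicy A σ → List (Sym A) → Prop
  | .allPath r₁ r₂ _ _, n =>
      ∃ i x, FirstMatchAt n r₁.matches' i ∧ MatchedAt n i x ∧
        ∀ ns ∈ Subtrees (subNW n i x), ∀ ℓ, SeqLeafAt ns ℓ →
          callsOfPath ns (pathTo ns ℓ) ∈ r₂.matches'
  | .allChildren r _ p, n =>
      ∃ i x, FirstMatchAt n r.matches' i ∧ MatchedAt n i x ∧
        ∀ ns ∈ Subtrees (subNW n i x), TreeSem p ns
  | .existsChild r _ pl, n =>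
      ∃ i x, FirstMatchAt n r.matches' i ∧ MatchedAt n i x ∧
        ChainSem pl (subNW n i x) 0

/-- `ChainSem pl w lo`: there exist subtrees of `w`, rooted at children of
`w`'s root occurring at strictly increasing positions (all `≥ lo`), that
satisfy the policies of `pl` in order. -/
noncomputable def ChainSem {A σ : Type} : HPolicyList A σ → List (Sym A) → ℕ → Prop
  | .single p, w, lo =>
      ∃ m x', lo ≤ m ∧ IsChild w m ∧ MatchedAt w m x' ∧ TreeSem p (subNW w m x')
  | .cons p pl, w, lo =>
      ∃ m x', lo ≤ m ∧ IsChild w m ∧ MatchedAt w m x' ∧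
        TreeSem p (subNW w m x') ∧ ChainSem pl w (m+1)
end

/-! ### The compiler from hierarchical policies to VPAs

Following the paper's explicit compilation rules.  States of the DFA of the
regular expression after `match` are embedded as `St.dfa`; for `all-path`,
states of the DFA of the second regular expression are embedded as `St.dfa2`
and their augmented copies as `St.aug`; states of recursively compiled
sub-automata are embedded as `St.sub i ·`.  The control states are `St.beg`
(`q_beg`, initial), `St.fin` (`q_end`, the unique final state), `St.sat`
(`q_sat`), `St.exist` (`q_exists`) and `St.rej` (the sink reject state, to
which all missing transitions are sent to make the automaton complete). -/

mutual
/-- The VPA `⟦p⟧_VPA` compiled from a hierarchical policy `p`. -/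
noncomputable def compileH {A σ : Type} : HPolicy A σ → VPA A (St σ) (Option (St σ))
  | .allPath _ _ d₁ d₂ =>
      { qinit := .beg
        final := {St.fin}
        bot := none
        callStep := fun q s =>
          match q with
          | .beg => (.dfa (d₁.step d₁.start s), some .beg)
          | .dfa q₁ =>
              if q₁ ∈ d₁.accept then
                (.dfa2 (d₂.step d₂.start s), some (.aug d₂.start))
              else (.dfa (d₁.step q₁ s), some (.dfa q₁))
          | .dfa2 q₂ => (.dfa2 (d₂.step q₂ s), some (.aug q₂))
          | .aug q₂ => (.dfa2 (d₂.step q₂ s), some (.aug q₂))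
          | .sat => (.sat, some .sat)
          | _ => (.rej, some .rej)
        retStep := fun q γ s =>
          match q, γ with
          | .dfa q₁, some (.dfa q₁') =>
              if q₁ ∈ d₁.accept then .sat else .dfa q₁'
          | .dfa q₁, some .beg => if q₁ ∈ d₁.accept then .fin else .dfa q₁
          | .rej, some (.dfa q₁') => .dfa q₁'
          | .dfa2 q₂, some (.aug q₂') =>
              if q₂ ∈ d₂.accept then .aug q₂' else .rej
          | .dfa2 _, some (.dfa q₁') => .dfa q₁'
          | .aug _, some (.aug q₂') => .aug q₂'
          | .aug q₂, some (.dfa q₁') =>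
              if q₂ = d₂.start then
                (if d₁.step q₁' s ∈ d₁.accept then .sat else .dfa q₁')
              else .dfa q₁'
          | .aug q₂, some .beg => if q₂ = d₂.start then .fin else .rej
          | .sat, some .beg => .fin
          | .sat, some _ => .sat
          | _, _ => .rej }
  | .allChildren _ d p =>
      let Mp := compileH p
      { qinit := .beg
        final := {St.fin}
        bot := none
        callStep := fun q s =>
          match q with
          | .beg => (.dfa (d.step d.start s), some .beg)
          | .dfa q₁ =>
              if q₁ ∈ d.accept then
                (.sub 0 (Mp.callStep Mp.qinit s).1,
                  ((Mp.callStep Mp.qinit s).2).map (St.sub 0))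
              else (.dfa (d.step q₁ s), some (.dfa q₁))
          | .sub _ q' =>
              if q' ∈ Mp.final then
                (.sub 0 (Mp.callStep Mp.qinit s).1,
                  ((Mp.callStep Mp.qinit s).2).map (St.sub 0))
              else
                (.sub 0 (Mp.callStep q' s).1,
                  ((Mp.callStep q' s).2).map (St.sub 0))
          | .sat => (.sat, some .sat)
          | _ => (.rej, some .rej)
        retStep := fun q γ s =>
          match q, γ with
          | .sub _ q', some (.sub _ γ') =>
              if q' ∈ Mp.final then .rej
              else
                let dst := Mp.retStep q' (some γ') s
                if γ' = Mp.qinit ∧ dst ∉ Mp.final then .rej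
                else .sub 0 dst
          | .sub _ q', some (.dfa q₁) =>
              if q' ∈ Mp.final then
                (if d.step q₁ s ∈ d.accept then .sat else .dfa q₁)
              else .dfa q₁
          | .sub _ q', some .beg => if q' ∈ Mp.final then .fin else .rej
          | .dfa q₁, some (.dfa q₁') =>
              if q₁ ∈ d.accept then .sat else .dfa q₁'
          | .dfa q₁, some .beg => if q₁ ∈ d.accept then .fin else .dfa q₁
          | .rej, some (.dfa q₁') => .dfa q₁'
          | .sat, some .beg => .fin
          | .sat, some _ => .sat
          | _, _ => .rej }
  | .existsChild _ d pl =>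
      let Ms := compileHL pl
      let k := Ms.length
      { qinit := .beg
        final := {St.fin}
        bot := none
        callStep := fun q s =>
          match q with
          | .beg => (.dfa (d.step d.start s), some .beg)
          | .dfa q₁ =>
              if q₁ ∈ d.accept then
                match Ms[0]? with
                | some M₀ =>
                    (.sub 0 (M₀.callStep M₀.qinit s).1,
                      ((M₀.callStep M₀.qinit s).2).map (St.sub 0))
                | none => (.rej, some .rej)
              else (.dfa (d.step q₁ s), some (.dfa q₁))
          | .sub i q' =>
              match Ms[i]? with
              | none => (.rej, some .rej)
              | some Mi =>
                  if q' ∈ Mi.final then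
                    match Ms[i+1]? with
                    | some Mn =>
                        (.sub (i+1) (Mn.callStep Mn.qinit s).1,
                          ((Mn.callStep Mn.qinit s).2).map (St.sub (i+1)))
                    | none => (.exist, some .exist)
                  else
                    (.sub i (Mi.callStep q' s).1,
                      ((Mi.callStep q' s).2).map (St.sub i))
          | .exist => (.exist, some .exist)
          | .sat => (.sat, some .sat)
          | _ => (.rej, some .rej)
        retStep := fun q γ s =>
          match q, γ with
          | .sub i q', some (.sub j γ') =>
              if i = j then
                match Ms[i]? with
                | some Mi =>
                    if q' ∈ Mi.final then .rej
                    else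
                      let dst := Mi.retStep q' (some γ') s
                      if γ' = Mi.qinit ∧ dst ∉ Mi.final then .sub i Mi.qinit
                      else .sub i dst
                | none => .rej
              else .rej
          | .sub i q', some (.dfa q₁) =>
              match Ms[i]? with
              | some Mi =>
                  if q' ∈ Mi.final ∧ i = k - 1 then
                    (if d.step q₁ s ∈ d.accept then .sat else .dfa q₁)
                  else .dfa q₁
              | none => .rej
          | .sub i q', some .beg =>
              (match Ms[i]? with
               | some Mi => if q' ∈ Mi.final ∧ i = k - 1 then .fin else .rej
               | none => .rej)
          | .dfa _, some (.dfa q₁') => .dfa q₁'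
          | .rej, some (.dfa q₁') => .dfa q₁'
          | .exist, some (.dfa q₁) =>
              if d.step q₁ s ∈ d.accept then .sat else .rej
          | .exist, some .beg => .fin
          | .exist, some _ => .exist
          | .sat, some .beg => .fin
          | .sat, some _ => .sat
          | _, _ => .rej }

/-- The list of VPAs compiled from a list of hierarchical policies. -/
noncomputable def compileHL {A σ : Type} :
    HPolicyList A σ → List (VPA A (St σ) (Option (St σ)))
  | .single p => [compileH p]
  | .cons p pl => compileH p :: compileHL pl
end

/-! ### Depth, fan-out, and state sets of compiled VPAs -/

/-- The length `k` of a policy list `p₁ then … then p_k`. -/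
def HPolicyList.len {A σ : Type} : HPolicyList A σ → ℕ
  | .single _ => 1
  | .cons _ pl => 1 + pl.len

mutual
/-- The nesting depth of a hierarchical policy. -/
def HPolicy.depth {A σ : Type} : HPolicy A σ → ℕ
  | .allPath _ _ _ _ => 1
  | .allChildren _ _ p => 1 + p.depth
  | .existsChild _ _ pl => 1 + pl.depthL

/-- The maximal nesting depth over a policy list. -/
def HPolicyList.depthL {A σ : Type} : HPolicyList A σ → ℕ
  | .single p => p.depth
  | .cons p pl => max p.depth pl.depthL
end

mutual
/-- The maximum fan-out of a hierarchical policy. -/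
def HPolicy.fanout {A σ : Type} : HPolicy A σ → ℕ
  | .allPath _ _ _ _ => 2
  | .allChildren _ _ p => 1 + p.fanout
  | .existsChild _ _ pl => 1 + max pl.len pl.fanoutL

/-- The maximal fan-out over a policy list. -/
def HPolicyList.fanoutL {A σ : Type} : HPolicyList A σ → ℕ
  | .single p => p.fanout
  | .cons p pl => max p.fanout pl.fanoutL
end

/-- The state set of the VPA compiled from a linear sequence policy
`callseq reg` given a DFA for `reg` over state type `σ`:
`{q_beg, q_end, q_rej} ∪ Q¹`. -/
noncomputable def linStates (A σ : Type) [Fintype σ] [DecidableEq σ]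
    (_r : RegularExpression A) (_d : DFA A σ) : Finset (St σ) :=
  {St.beg, St.fin, St.rej} ∪ Finset.univ.image St.dfa

mutual
/-- The state set of the VPA compiled from a hierarchical policy, per the
paper's compilation rules:
for `match reg₁ all-path reg₂`, `{q_beg, q_end, q_sat, q²_rej} ∪ Q¹ ∪ Q² ∪ aug(Q²)`;
for `match reg all-children p'`, `{q_beg, q_end, q_sat, q_rej} ∪ Q¹ ∪ Q^{p'}`;
for `match reg exists-child p₁ … p_k`,
`{q_beg, q_end, q_rej, q_exists, q_sat} ∪ Q¹ ∪ Q^{p₁} ∪ … ∪ Q^{p_k}`. -/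
noncomputable def HPolicy.states {A σ : Type} [Fintype σ] [DecidableEq σ] :
    HPolicy A σ → Finset (St σ)
  | .allPath _ _ _ _ =>
      {St.beg, St.fin, St.sat, St.rej} ∪ Finset.univ.image St.dfa
        ∪ Finset.univ.image St.dfa2 ∪ Finset.univ.image St.aug
  | .allChildren _ _ p =>
      {St.beg, St.fin, St.sat, St.rej} ∪ Finset.univ.image St.dfa
        ∪ p.states.image (St.sub 0)
  | .existsChild _ _ pl =>
      {St.beg, St.fin, St.rej, St.exist, St.sat} ∪ Finset.univ.image St.dfa
        ∪ pl.statesL 0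

/-- The union of the (disjointly embedded) state sets of the VPAs compiled
from a list of policies. -/
noncomputable def HPolicyList.statesL {A σ : Type} [Fintype σ] [DecidableEq σ] :
    HPolicyList A σ → ℕ → Finset (St σ)
  | .single p, i => p.states.image (St.sub i)
  | .cons p pl, i => p.states.image (St.sub i) ∪ pl.statesL (i+1)
end

/-! ### Top-level `start S : inner` policies -/

/-- The inner policy of a top-level policy: a hierarchical policy or a linear
sequence policy `callseq reg` (with a DFA for `reg`). -/
inductive Inner (A σ : Type) : Type
  | hier : HPolicy A σ → Inner A σ
  | lin : RegularExpression A → DFA A σ → Inner A σ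

/-- Well-formedness of an inner policy. -/
def Inner.WF {A σ : Type} : Inner A σ → Prop
  | .hier p => p.WF
  | .lin r d => d.accepts = r.matches'

/-- The semantics `⟦inner⟧` of an inner policy: `⟦·⟧_Tree` for hierarchical
policies, `⟦·⟧_Seq` for linear sequence policies. -/
noncomputable def InnerSem {A σ : Type} : Inner A σ → List (Sym A) → Prop
  | .hier p, n => TreeSem p n
  | .lin r _, n => callsOf n ∈ r.matches'

/-- The recursively compiled VPA of an inner policy. -/
noncomputable def Inner.vpa {A σ : Type} : Inner A σ → VPA A (St σ) (Option (St σ))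
  | .hier p => compileH p
  | .lin _ d => compileLin d

/-- The language `Σ̃* S`: nonempty words over the base alphabet whose last
symbol lies in `S`. -/
def startLang {A : Type} (S : Set A) : Language A :=
  {w | ∃ (w' : List A) (a : A), w = w' ++ [a] ∧ a ∈ S}

/-- The semantics `⟦start S : inner⟧`: for every path from the root that is a
first match of `Σ̃* S` and ends at a call position `i` with matched return
`x`, the sub-nested word `n[i, x]` satisfies `⟦inner⟧`. -/
noncomputable def StartSem {A σ : Type} (S : Set A) (inn : Inner A σ)
    (n : List (Sym A)) : Prop :=
  ∀ i x, FirstMatchAt n (startLang S) i → MatchedAt n i x →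
    InnerSem inn (subNW n i x)

/-- The VPA `⟦start S : inner⟧_VPA` compiled from a top-level policy, given a
DFA `dS` for `Σ̃* S`: it simulates `dS` on call symbols while pushing its
states; upon reaching a final state of `dS` it switches into a simulation of
the recursively compiled VPA of `inner` on the subtree rooted there (keeping
the `dS`-state on the stack), returns to the `dS`-simulation by stack
backtracking after such a subtree is accepted, rejects (sink state `q_rej`) if
such a subtree is not accepted by `inner`'s VPA, and accepts at `q_end` on the
matched return of the first symbol. -/
noncomputable def compileStart {A σ : Type} (dS : DFA A σ) (inn : Inner A σ) :
    VPA A (St σ) (Option (St σ)) :=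
  let Mi := inn.vpa
  { qinit := .beg
    final := {St.fin}
    bot := none
    callStep := fun q s =>
      match q with
      | .beg =>
          if dS.step dS.start s ∈ dS.accept then
            (.sub 0 (Mi.callStep Mi.qinit s).1, some .beg)
          else (.dfa (dS.step dS.start s), some .beg)
      | .dfa q₁ =>
          if dS.step q₁ s ∈ dS.accept then
            (.sub 0 (Mi.callStep Mi.qinit s).1, some (.dfa q₁))
          else (.dfa (dS.step q₁ s), some (.dfa q₁))
      | .sub _ q' =>
          if q' ∈ Mi.final then (.rej, some .rej)
          else
            (.sub 0 (Mi.callStep q' s).1, ((Mi.callStep q' s).2).map (St.sub 0))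
      | _ => (.rej, some .rej)
    retStep := fun q γ s =>
      match q, γ with
      | .dfa q₁, some .beg => if q₁ = dS.step dS.start s then .fin else .rej
      | .sub _ q', some .beg =>
          if Mi.retStep q' (some Mi.qinit) s ∈ Mi.final ∧
              dS.step dS.start s ∈ dS.accept then .fin
          else .rej
      | .sub _ q', some (.dfa q₁) =>
          if Mi.retStep q' (some Mi.qinit) s ∈ Mi.final ∧
              dS.step q₁ s ∈ dS.accept then .dfa q₁
          else .rej
      | .sub _ q', some (.sub _ γ') =>
          if q' ∈ Mi.final ∨ γ' = Mi.qinit then .rej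
          else .sub 0 (Mi.retStep q' (some γ') s)
      | .dfa _, some (.dfa q₁') => .dfa q₁'
      | _, _ => .rej }

/-- Depth of an inner policy. -/
def Inner.depth {A σ : Type} : Inner A σ → ℕ
  | .hier p => p.depth
  | .lin _ _ => 1

/-- Fan-out of an inner policy. -/
def Inner.fanout {A σ : Type} : Inner A σ → ℕ
  | .hier p => p.fanout
  | .lin _ _ => 1

/-- State set of the VPA compiled from an inner policy. -/
noncomputable def Inner.states {A σ : Type} [Fintype σ] [DecidableEq σ] :
    Inner A σ → Finset (St σ)
  | .hier p => p.states
  | .lin r d => linStates A σ r d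

/-- A SafeTree policy: a linear sequence policy, a hierarchical policy, or a
top-level policy `start S : inner` (with a DFA for `Σ̃* S`). -/
inductive SPolicy (A σ : Type) : Type
  | lin : RegularExpression A → DFA A σ → SPolicy A σ
  | hier : HPolicy A σ → SPolicy A σ
  | start : Set A → DFA A σ → Inner A σ → SPolicy A σ

/-- The nesting depth of a SafeTree policy. -/
def SPolicy.depth {A σ : Type} : SPolicy A σ → ℕ
  | .lin _ _ => 1
  | .hier p => p.depth
  | .start _ _ inn => 1 + inn.depth

/-- The maximum fan-out of a SafeTree policy. -/
def SPolicy.fanout {A σ : Type} : SPolicy A σ → ℕ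
  | .lin _ _ => 1
  | .hier p => p.fanout
  | .start _ _ inn => 1 + inn.fanout

/-- The state set of the VPA compiled from a SafeTree policy.  For
`start S : inner` it is `{q_beg, q_end, q_rej}` together with the non-final
states of the DFA for `Σ̃* S` and the states of the recursively compiled VPA
of `inner` other than its initial (`q_beg`) and final (`q_end`) states. -/
noncomputable def SPolicy.states {A σ : Type} [Fintype σ] [DecidableEq σ] :
    SPolicy A σ → Finset (St σ)
  | .lin r d => linStates A σ r d
  | .hier p => p.states
  | .start _ dS inn =>
      {St.beg, St.fin, St.rej}
        ∪ (Finset.univ.filter (fun q => q ∉ dS.accept)).image St.dfa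
        ∪ (((inn.states).erase St.beg).erase St.fin).image (St.sub 0)

/-! ### Auxiliary counting lemmas -/

section Aux

variable {A σ : Type} [Fintype σ] [DecidableEq σ]

private lemma img_card (f : σ → St σ) :
    ((Finset.univ : Finset σ).image f).card ≤ Fintype.card σ :=
  Finset.card_image_le.trans (le_of_eq Finset.card_univ)

private lemma card_quad {α : Type} [DecidableEq α] (a b c d : α) :
    ({a, b, c, d} : Finset α).card ≤ 4 := by
  have h1 := Finset.card_insert_le a ({b, c, d} : Finset α)
  have h2 := Finset.card_insert_le b ({c, d} : Finset α)
  have h3 := Finset.card_insert_le c ({d} : Finset α)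
  have h4 : ({d} : Finset α).card = 1 := Finset.card_singleton d
  omega

private lemma card_quint {α : Type} [DecidableEq α] (a b c d e : α) :
    ({a, b, c, d, e} : Finset α).card ≤ 5 := by
  have h1 := Finset.card_insert_le a ({b, c, d, e} : Finset α)
  have h2 := card_quad b c d e
  omega

private lemma card_triple {α : Type} [DecidableEq α] (a b c : α) :
    ({a, b, c} : Finset α).card ≤ 3 := by
  have h1 := Finset.card_insert_le a ({b, c} : Finset α)
  have h2 := Finset.card_insert_le b ({c} : Finset α)
  have h3 : ({c} : Finset α).card = 1 := Finset.card_singleton c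
  omega

private lemma pow_split (k d : ℕ) (hd : 1 ≤ d) :
    (k + 1) ^ d = (k + 1) ^ (d - 1) * (k + 1) := by
  rw [← pow_succ]
  congr 1
  omega

mutual

private theorem hbound :
    ∀ (p : HPolicy A σ) (R k d : ℕ), Fintype.card σ ≤ R →
      p.fanout ≤ k → p.depth ≤ d →
      p.states.card ≤ (k + 1) ^ d * (R + 5)
  | .allPath r1 r2 d1 d2, R, k, d, hR, hk, hd => by
      have hk' : 2 ≤ k := by simpa [HPolicy.fanout] using hk
      have hd' : 1 ≤ d := by simpa [HPolicy.depth] using hd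
      have hcard : ((HPolicy.allPath r1 r2 d1 d2 : HPolicy A σ)).states.card
          ≤ 4 + R + R + R := by
        simp only [HPolicy.states]
        have u1 := Finset.card_union_le
          (({St.beg, St.fin, St.sat, St.rej} : Finset (St σ))
            ∪ Finset.univ.image St.dfa ∪ Finset.univ.image St.dfa2)
          (Finset.univ.image St.aug)
        have u2 := Finset.card_union_le
          (({St.beg, St.fin, St.sat, St.rej} : Finset (St σ))
            ∪ Finset.univ.image St.dfa) (Finset.univ.image St.dfa2)
        have u3 := Finset.card_union_le
          ({St.beg, St.fin, St.sat, St.rej} : Finset (St σ))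
          (Finset.univ.image St.dfa)
        have c4 := card_quad (St.beg : St σ) St.fin St.sat St.rej
        have i1 := img_card (St.dfa : σ → St σ)
        have i2 := img_card (St.dfa2 : σ → St σ)
        have i3 := img_card (St.aug : σ → St σ)
        omega
      have hpow : 3 ≤ (k + 1) ^ d := by
        calc (3 : ℕ) = 3 ^ 1 := by norm_num
        _ ≤ (k + 1) ^ 1 := Nat.pow_le_pow_left (by omega) 1
        _ ≤ (k + 1) ^ d := Nat.pow_le_pow_right (by omega) hd'
      calc ((HPolicy.allPath r1 r2 d1 d2 : HPolicy A σ)).states.card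
          ≤ 4 + R + R + R := hcard
        _ ≤ 3 * (R + 5) := by omega
        _ ≤ (k + 1) ^ d * (R + 5) := Nat.mul_le_mul_right _ hpow
  | .allChildren r dd p', R, k, d, hR, hk, hd => by
      have hk' : 1 + p'.fanout ≤ k := by simpa [HPolicy.fanout] using hk
      have hd' : 1 + p'.depth ≤ d := by simpa [HPolicy.depth] using hd
      have ih := hbound p' R k (d - 1) hR (by omega) (by omega)
      have hcard : ((HPolicy.allChildren r dd p' : HPolicy A σ)).states.card
          ≤ 4 + R + p'.states.card := by
        simp only [HPolicy.states]
        have u1 := Finset.card_union_le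
          (({St.beg, St.fin, St.sat, St.rej} : Finset (St σ))
            ∪ Finset.univ.image St.dfa) (p'.states.image (St.sub 0))
        have u2 := Finset.card_union_le
          ({St.beg, St.fin, St.sat, St.rej} : Finset (St σ))
          (Finset.univ.image St.dfa)
        have c4 := card_quad (St.beg : St σ) St.fin St.sat St.rej
        have i1 := img_card (St.dfa : σ → St σ)
        have i2 : (p'.states.image (St.sub 0)).card ≤ p'.states.card :=
          Finset.card_image_le
        omega
      have hP : 1 ≤ (k + 1) ^ (d - 1) := Nat.one_le_pow _ _ (by omega)
      have hsplit := pow_split k d (by omega)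
      refine hcard.trans ?_
      rw [hsplit]
      have hle : R + 5 ≤ (k + 1) ^ (d - 1) * (R + 5) :=
        Nat.le_mul_of_pos_left _ (by omega)
      calc 4 + R + p'.states.card
          ≤ (R + 5) + (k + 1) ^ (d - 1) * (R + 5) := by omega
        _ ≤ (k + 1) ^ (d - 1) * (R + 5) + (k + 1) ^ (d - 1) * (R + 5) := by
            omega
        _ = (k + 1) ^ (d - 1) * 2 * (R + 5) := by ring
        _ ≤ (k + 1) ^ (d - 1) * (k + 1) * (R + 5) := by
            refine Nat.mul_le_mul_right _ ?_
            exact Nat.mul_le_mul_left _ (by omega)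
  | .existsChild r dd pl, R, k, d, hR, hk, hd => by
      have hk' : 1 + max pl.len pl.fanoutL ≤ k := by
        simpa [HPolicy.fanout] using hk
      have hd' : 1 + pl.depthL ≤ d := by simpa [HPolicy.depth] using hd
      have hlen : pl.len + 1 ≤ k := by
        have := le_max_left pl.len pl.fanoutL; omega
      have hfl : pl.fanoutL ≤ k := by
        have := le_max_right pl.len pl.fanoutL; omega
      have ih := hlbound pl 0 R k (d - 1) hR hfl (by omega)
      have hcard : ((HPolicy.existsChild r dd pl : HPolicy A σ)).states.card
          ≤ 5 + R + (pl.statesL 0).card := by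
        simp only [HPolicy.states]
        have u1 := Finset.card_union_le
          (({St.beg, St.fin, St.rej, St.exist, St.sat} : Finset (St σ))
            ∪ Finset.univ.image St.dfa) (pl.statesL 0)
        have u2 := Finset.card_union_le
          ({St.beg, St.fin, St.rej, St.exist, St.sat} : Finset (St σ))
          (Finset.univ.image St.dfa)
        have c5 := card_quint (St.beg : St σ) St.fin St.rej St.exist St.sat
        have i1 := img_card (St.dfa : σ → St σ)
        omega
      have hP : 1 ≤ (k + 1) ^ (d - 1) := Nat.one_le_pow _ _ (by omega)
      have hsplit := pow_split k d (by omega)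
      refine hcard.trans ?_
      rw [hsplit]
      have hle : R + 5 ≤ (k + 1) ^ (d - 1) * (R + 5) :=
        Nat.le_mul_of_pos_left _ (by omega)
      calc 5 + R + (pl.statesL 0).card
          ≤ (R + 5) + pl.len * ((k + 1) ^ (d - 1) * (R + 5)) := by omega
        _ ≤ (k + 1) ^ (d - 1) * (R + 5)
              + pl.len * ((k + 1) ^ (d - 1) * (R + 5)) := by omega
        _ = (1 + pl.len) * ((k + 1) ^ (d - 1) * (R + 5)) := by ring
        _ ≤ (k + 1) * ((k + 1) ^ (d - 1) * (R + 5)) :=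
            Nat.mul_le_mul_right _ (by omega)
        _ = (k + 1) ^ (d - 1) * (k + 1) * (R + 5) := by ring

private theorem hlbound :
    ∀ (pl : HPolicyList A σ) (i R k d : ℕ), Fintype.card σ ≤ R →
      pl.fanoutL ≤ k → pl.depthL ≤ d →
      (pl.statesL i).card ≤ pl.len * ((k + 1) ^ d * (R + 5))
  | .single p, i, R, k, d, hR, hk, hd => by
      have hk' : p.fanout ≤ k := by simpa [HPolicyList.fanoutL] using hk
      have hd' : p.depth ≤ d := by simpa [HPolicyList.depthL] using hd
      have ih := hbound p R k d hR hk' hd'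
      have : ((HPolicyList.single p : HPolicyList A σ)).statesL i
          = p.states.image (St.sub i) := rfl
      rw [this]
      have h1 : (p.states.image (St.sub i)).card ≤ p.states.card :=
        Finset.card_image_le
      simpa [HPolicyList.len] using h1.trans ih
  | .cons p pl, i, R, k, d, hR, hk, hd => by
      have hk1 : p.fanout ≤ k := by
        have := le_max_left p.fanout pl.fanoutL
        simp only [HPolicyList.fanoutL] at hk; omega
      have hk2 : pl.fanoutL ≤ k := by
        have := le_max_right p.fanout pl.fanoutL
        simp only [HPolicyList.fanoutL] at hk; omega
      have hd1 : p.depth ≤ d := by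
        have := le_max_left p.depth pl.depthL
        simp only [HPolicyList.depthL] at hd; omega
      have hd2 : pl.depthL ≤ d := by
        have := le_max_right p.depth pl.depthL
        simp only [HPolicyList.depthL] at hd; omega
      have ih1 := hbound p R k d hR hk1 hd1
      have ih2 := hlbound pl (i + 1) R k d hR hk2 hd2
      have hu := Finset.card_union_le (p.states.image (St.sub i))
        (pl.statesL (i + 1))
      have h1 : (p.states.image (St.sub i)).card ≤ p.states.card :=
        Finset.card_image_le
      have : ((HPolicyList.cons p pl : HPolicyList A σ)).statesL i
          = p.states.image (St.sub i) ∪ pl.statesL (i + 1) := rfl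
      rw [this]
      have hlen : ((HPolicyList.cons p pl : HPolicyList A σ)).len
          = 1 + pl.len := rfl
      rw [hlen, Nat.add_mul, Nat.one_mul]
      omega

end

private lemma lin_card (r : RegularExpression A) (dd : DFA A σ) (R : ℕ)
    (hR : Fintype.card σ ≤ R) : (linStates A σ r dd).card ≤ 3 + R := by
  unfold linStates
  have u := Finset.card_union_le ({St.beg, St.fin, St.rej} : Finset (St σ))
    ((Finset.univ : Finset σ).image St.dfa)
  have c3 := card_triple (St.beg : St σ) St.fin St.rej
  have i1 := img_card (St.dfa : σ → St σ)
  omega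

private lemma ibound (inn : Inner A σ) (R k d : ℕ)
    (hR : Fintype.card σ ≤ R) (hk : inn.fanout ≤ k) (hd : inn.depth ≤ d) :
    inn.states.card ≤ (k + 1) ^ d * (R + 5) := by
  cases inn with
  | hier p => exact hbound p R k d hR hk hd
  | lin r dd =>
      have hk' : 1 ≤ k := by simpa [Inner.fanout] using hk
      have hd' : 1 ≤ d := by simpa [Inner.depth] using hd
      have hpow : 2 ≤ (k + 1) ^ d := by
        calc (2 : ℕ) = 2 ^ 1 := by norm_num
        _ ≤ (k + 1) ^ 1 := Nat.pow_le_pow_left (by omega) 1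
        _ ≤ (k + 1) ^ d := Nat.pow_le_pow_right (by omega) hd'
      calc (Inner.lin r dd : Inner A σ).states.card ≤ 3 + R :=
            lin_card r dd R hR
        _ ≤ 2 * (R + 5) := by omega
        _ ≤ (k + 1) ^ d * (R + 5) := Nat.mul_le_mul_right _ hpow

end Aux

/-- If every DFA of a regular expression occurring in the
SafeTree policy `p` has at most `R` states (all these DFAs live over the state
type `σ`, so this reads `card σ ≤ R`), every sub-policy of `p` has fan-out at
most `k`, and `p` has nesting depth at most `d`, then the VPA `⟦p⟧_VPA`
compiled from `p` has at most `(k+1)^d * (R+5)` states; in particular its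
number of states is `O((k+1)^d * R)`. -/
theorem stmt13 {A σ : Type} [Fintype A] [Fintype σ] [DecidableEq σ]
    (p : SPolicy A σ) (R k d : ℕ)
    (hR : Fintype.card σ ≤ R) (hk : p.fanout ≤ k) (hd : p.depth ≤ d) :
    (p.states).card ≤ (k + 1) ^ d * (R + 5) := by
  cases p with
  | hier p => exact hbound p R k d hR hk hd
  | lin r dd =>
      have hk' : 1 ≤ k := by simpa [SPolicy.fanout] using hk
      have hd' : 1 ≤ d := by simpa [SPolicy.depth] using hd
      have hpow : 2 ≤ (k + 1) ^ d := by
        calc (2 : ℕ) = 2 ^ 1 := by norm_num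
        _ ≤ (k + 1) ^ 1 := Nat.pow_le_pow_left (by omega) 1
        _ ≤ (k + 1) ^ d := Nat.pow_le_pow_right (by omega) hd'
      calc (SPolicy.lin r dd : SPolicy A σ).states.card ≤ 3 + R :=
            lin_card r dd R hR
        _ ≤ 2 * (R + 5) := by omega
        _ ≤ (k + 1) ^ d * (R + 5) := Nat.mul_le_mul_right _ hpow
  | start S dS inn =>
      have hk' : 1 + inn.fanout ≤ k := by simpa [SPolicy.fanout] using hk
      have hd' : 1 + inn.depth ≤ d := by simpa [SPolicy.depth] using hd
      have ih := ibound inn R k (d - 1) hR (by omega) (by omega)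
      have hcard : ((SPolicy.start S dS inn : SPolicy A σ)).states.card
          ≤ 3 + R + inn.states.card := by
        simp only [SPolicy.states]
        have u1 := Finset.card_union_le
          (({St.beg, St.fin, St.rej} : Finset (St σ))
            ∪ (Finset.univ.filter (fun q => q ∉ dS.accept)).image St.dfa)
          ((((inn.states).erase St.beg).erase St.fin).image (St.sub 0))
        have u2 := Finset.card_union_le
          ({St.beg, St.fin, St.rej} : Finset (St σ))
          ((Finset.univ.filter (fun q => q ∉ dS.accept)).image St.dfa)
        have c3 := card_triple (St.beg : St σ) St.fin St.rej
        have i1 : ((Finset.univ.filter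
            (fun q => q ∉ dS.accept)).image St.dfa).card ≤ R := by
          refine Finset.card_image_le.trans ?_
          refine (Finset.card_filter_le _ _).trans ?_
          simpa [Finset.card_univ] using hR
        have i2 : ((((inn.states).erase St.beg).erase St.fin).image
            (St.sub 0)).card ≤ inn.states.card := by
          refine Finset.card_image_le.trans ?_
          exact (Finset.card_erase_le).trans Finset.card_erase_le
        omega
      have hP : 1 ≤ (k + 1) ^ (d - 1) := Nat.one_le_pow _ _ (by omega)
      have hsplit := pow_split k d (by omega)
      have hfan1 : 1 ≤ inn.fanout := by
        cases inn with
        | hier q => cases q <;> simp [Inner.fanout, HPolicy.fanout]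
        | lin r dd => simp [Inner.fanout]
      have hk2 : 2 ≤ k := by omega
      refine hcard.trans ?_
      rw [hsplit]
      have hle : R + 5 ≤ (k + 1) ^ (d - 1) * (R + 5) :=
        Nat.le_mul_of_pos_left _ (by omega)
      calc 3 + R + inn.states.card
          ≤ (R + 5) + (k + 1) ^ (d - 1) * (R + 5) := by omega
        _ ≤ (k + 1) ^ (d - 1) * (R + 5) + (k + 1) ^ (d - 1) * (R + 5) := by
            omega
        _ = (k + 1) ^ (d - 1) * 2 * (R + 5) := by ring
        _ ≤ (k + 1) ^ (d - 1) * (k + 1) * (R + 5) := by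
            refine Nat.mul_le_mul_right _ ?_
            exact Nat.mul_le_mul_left _ (by omega)

end SafeTree
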